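/- Let G₁, G₂:[0,1]²→ℝ be bounded measurable interaction functions with corresponding bounded solutions Q₁, Q₂ of Q_i(t,u) = 1 + ∫_t^T ∫_0^1 G_i(v,u) Q_i(s,v) dv ds. For each u ∈ [0,1] let ν_i(u) be the Gaussian law with mean (1/2)∫_0^T Q_i(t,u)² dt and variance ∫_0^T Q_i(t,u)² dt. Then there exists C > 0 (depending on T, ‖G₁‖_∞, ‖G₂‖_∞) such that for all u ∈ [0,1], W₂(ν₁(u), ν₂(u)) ≤ C (‖G₁ − G₂‖_∞^{1/2} + ‖G₁ − G₂‖_∞). -/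

import Mathlib

/-!
Write `Δ = Q₁ - Q₂`, `δ = ‖G₁ - G₂‖_∞` and `M₁ = ‖Q₁‖_∞`. Subtracting the two integral
equations and splitting `G₁ Q₁ - G₂ Q₂ = (G₁ - G₂) Q₁ + G₂ (Q₁ - Q₂)` gives
`|Δ(t,u)| ≤ δ M₁ T + ‖G₂‖_∞ ∫_t^T φ` with `φ(s) = ∫₀¹ |Δ(s,v)| dv`. Integrating in `u`, `φ`
satisfies the same inequality, so a backward Grönwall argument bounds `|Δ|` by a multiple of `δ`,
and hence the second moments `I_i(u) = ∫₀ᵀ Q_i(t,u)² dt` differ by `O(δ)`.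
Realising both Gaussians as affine images of one standard normal bounds
`W₂(ν₁(u), ν₂(u))` by `|m₁ - m₂| + |√I₁ - √I₂|`; the first term is `O(δ)` and the second is at
most `√|I₁ - I₂| = O(√δ)`.
-/

open MeasureTheory intervalIntegral Set

/-- The Wasserstein-2 distance between two probability measures on ℝ:
the infimum over couplings `κ` of `(∫ |x-y|² dκ)^{1/2}`. -/
noncomputable def W2 (μ ν : Measure ℝ) : ℝ :=
  sInf {c : ℝ | ∃ κ : Measure (ℝ × ℝ), IsProbabilityMeasure κ ∧
    κ.map Prod.fst = μ ∧ κ.map Prod.snd = ν ∧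
    c = ((∫⁻ p, ENNReal.ofReal (|p.1 - p.2| ^ 2) ∂κ) ^ (1/2 : ℝ)).toReal}

open ProbabilityTheory NNReal Real

lemma intervalIntegrable_of_abs_le {f : ℝ → ℝ} {M : ℝ} (hf : Measurable f)
    (hM : ∀ x, |f x| ≤ M) (a b : ℝ) : IntervalIntegrable f volume a b :=
  (intervalIntegrable_const (c := M)).mono_fun' hf.aestronglyMeasurable
    (ae_of_all _ fun x => hM x)

lemma continuous_intervalIntegral_of_abs_le {X : Type*} [TopologicalSpace X]
    [FirstCountableTopology X] {F : X → ℝ → ℝ}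
    {M : ℝ} (hm : ∀ x, Measurable (F x)) (hM : ∀ x v, |F x v| ≤ M)
    (hc : ∀ v, Continuous fun x => F x v) (a b : ℝ) :
    Continuous fun x => ∫ v in a..b, F x v :=
  continuous_of_dominated_interval (fun x => (hm x).aestronglyMeasurable)
    (fun x => ae_of_all _ fun v _ => hM x v) intervalIntegrable_const (ae_of_all _ fun v _ => hc v)

lemma add_mul_gronwallBound_zero (K a x : ℝ) : a + K * gronwallBound 0 K a x = a * exp (K * x) := by
  rcases eq_or_ne K 0 with rfl | hK
  · simp [gronwallBound_K0]
  · rw [gronwallBound_of_K_ne_0 hK]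
    field_simp
    ring

lemma add_mul_integral_le_mul_exp {φ : ℝ → ℝ} {a K t₀ T : ℝ} (hφ : Continuous φ) (hK : 0 ≤ K)
    (h : ∀ t ∈ Icc t₀ T, φ t ≤ a + K * ∫ s in t..T, φ s) (t : ℝ) (ht : t ∈ Icc t₀ T) :
    a + K * ∫ s in t..T, φ s ≤ a * exp (K * (T - t)) := by
  -- reversing time turns the backward inequality into one for the forward Grönwall lemma
  set η : ℝ → ℝ := fun τ => ∫ s in (T - τ)..T, φ s
  have hη : ∀ τ, HasDerivAt η (φ (T - τ)) τ := fun τ => by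
    simpa using (integral_hasDerivAt_left (hφ.intervalIntegrable _ T)
      (hφ.stronglyMeasurableAtFilter _ _) hφ.continuousAt).comp_const_sub T τ
  have hgron := le_gronwallBound_of_liminf_deriv_right_le (f := η) (δ := 0) (K := K) (ε := a)
    (a := 0) (b := T - t₀)
    (continuous_iff_continuousAt.2 fun τ => (hη τ).continuousAt).continuousOn
    (fun τ _ r hr => (hη τ).hasDerivWithinAt.liminf_right_slope_le hr) (by simp [η])
    (fun τ hτ => by
      have := h (T - τ) ⟨by linarith [hτ.2], by linarith [hτ.1]⟩
      simp only [η]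
      linarith)
    (T - t) ⟨by linarith [ht.2], by linarith [ht.1]⟩
  simp only [η, sub_sub_cancel, sub_zero] at hgron
  calc a + K * ∫ s in t..T, φ s ≤ a + K * gronwallBound 0 K a (T - t) := by gcongr
    _ = a * exp (K * (T - t)) := add_mul_gronwallBound_zero K a (T - t)

noncomputable def kernelIntegral (G Q : ℝ → ℝ → ℝ) (s u : ℝ) : ℝ :=
  ∫ v in (0:ℝ)..1, G v u * Q s v

structure IsBoundedSolution (T : ℝ) (G Q : ℝ → ℝ → ℝ) (MG M : ℝ) : Prop where
  measurable_kernel : Measurable (Function.uncurry G)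
  abs_kernel_le : ∀ u v, |G u v| ≤ MG
  measurable : ∀ t, Measurable (Q t)
  abs_le : ∀ t u, |Q t u| ≤ M
  continuous : ∀ u, Continuous fun t => Q t u
  eq : ∀ t ∈ Icc (0:ℝ) T, ∀ u ∈ Icc (0:ℝ) 1, Q t u = 1 + ∫ s in t..T, kernelIntegral G Q s u

namespace IsBoundedSolution

variable {T MG M MG' M' δ : ℝ} {G Q G' Q' : ℝ → ℝ → ℝ}

lemma bound_nonneg (h : IsBoundedSolution T G Q MG M) : 0 ≤ M :=
  (abs_nonneg _).trans (h.abs_le 0 0)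

lemma kernel_bound_nonneg (h : IsBoundedSolution T G Q MG M) : 0 ≤ MG :=
  (abs_nonneg _).trans (h.abs_kernel_le 0 0)

lemma measurable_integrand (h : IsBoundedSolution T G Q MG M) (s u : ℝ) :
    Measurable fun v => G v u * Q s v :=
  (h.measurable_kernel.comp (measurable_id.prodMk measurable_const)).mul (h.measurable s)

lemma abs_integrand_le (h : IsBoundedSolution T G Q MG M) (s u v : ℝ) :
    |G v u * Q s v| ≤ MG * M := by
  rw [abs_mul]
  exact mul_le_mul (h.abs_kernel_le v u) (h.abs_le s v) (abs_nonneg _) h.kernel_bound_nonneg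

lemma continuous_kernelIntegral (h : IsBoundedSolution T G Q MG M) (u : ℝ) :
    Continuous fun s => kernelIntegral G Q s u :=
  continuous_intervalIntegral_of_abs_le (fun s => h.measurable_integrand s u)
    (fun s v => h.abs_integrand_le s u v) (fun v => continuous_const.mul (h.continuous v)) 0 1

lemma abs_abs_sub_le (h : IsBoundedSolution T G Q MG M) (h' : IsBoundedSolution T G' Q' MG' M')
    (t v : ℝ) : |(|Q t v - Q' t v|)| ≤ M + M' := by
  rw [abs_abs]
  exact (abs_sub _ _).trans (add_le_add (h.abs_le t v) (h'.abs_le t v))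

lemma intervalIntegrable_abs_sub (h : IsBoundedSolution T G Q MG M)
    (h' : IsBoundedSolution T G' Q' MG' M') (t a b : ℝ) :
    IntervalIntegrable (fun v => |Q t v - Q' t v|) volume a b :=
  intervalIntegrable_of_abs_le ((h.measurable t).sub (h'.measurable t)).abs
    (abs_abs_sub_le h h' t) a b

lemma abs_kernelIntegral_sub_le (h : IsBoundedSolution T G Q MG M)
    (h' : IsBoundedSolution T G' Q' MG' M')
    (hδ : ∀ u ∈ Icc (0:ℝ) 1, ∀ v ∈ Icc (0:ℝ) 1, |G u v - G' u v| ≤ δ)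
    {u : ℝ} (hu : u ∈ Icc (0:ℝ) 1) (s : ℝ) :
    |kernelIntegral G Q s u - kernelIntegral G' Q' s u|
      ≤ δ * M + MG' * ∫ v in (0:ℝ)..1, |Q s v - Q' s v| := by
  have hint := intervalIntegrable_of_abs_le (h.measurable_integrand s u)
    (h.abs_integrand_le s u) 0 1
  have hint' := intervalIntegrable_of_abs_le (h'.measurable_integrand s u)
    (h'.abs_integrand_le s u) 0 1
  have hdiff := intervalIntegrable_abs_sub h h' s 0 1
  have hpt : ∀ v ∈ Icc (0:ℝ) 1, |G v u * Q s v - G' v u * Q' s v|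
      ≤ δ * M + MG' * |Q s v - Q' s v| := fun v hv => by
    calc |G v u * Q s v - G' v u * Q' s v|
        = |(G v u - G' v u) * Q s v + G' v u * (Q s v - Q' s v)| := by ring_nf
      _ ≤ |G v u - G' v u| * |Q s v| + |G' v u| * |Q s v - Q' s v| := by
        rw [← abs_mul, ← abs_mul]; exact abs_add_le _ _
      _ ≤ δ * M + MG' * |Q s v - Q' s v| := by
        gcongr
        · exact (abs_nonneg _).trans (hδ v hv u hu)
        · exact hδ v hv u hu
        · exact h.abs_le s v
        · exact h'.abs_kernel_le v u
  calc |kernelIntegral G Q s u - kernelIntegral G' Q' s u|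
      = |∫ v in (0:ℝ)..1, (G v u * Q s v - G' v u * Q' s v)| := by
        rw [intervalIntegral.integral_sub hint hint']; rfl
    _ ≤ ∫ v in (0:ℝ)..1, |G v u * Q s v - G' v u * Q' s v| :=
        intervalIntegral.abs_integral_le_integral_abs zero_le_one
    _ ≤ ∫ v in (0:ℝ)..1, (δ * M + MG' * |Q s v - Q' s v|) :=
        intervalIntegral.integral_mono_on zero_le_one (hint.sub hint').abs
          (intervalIntegrable_const.add (hdiff.const_mul _)) hpt
    _ = δ * M + MG' * ∫ v in (0:ℝ)..1, |Q s v - Q' s v| := by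
        rw [intervalIntegral.integral_add intervalIntegrable_const (hdiff.const_mul _),
          intervalIntegral.integral_const_mul]
        simp

lemma sub_eq_integral_kernelIntegral_sub (h : IsBoundedSolution T G Q MG M)
    (h' : IsBoundedSolution T G' Q' MG' M') {t : ℝ} (ht : t ∈ Icc 0 T)
    {u : ℝ} (hu : u ∈ Icc (0:ℝ) 1) :
    Q t u - Q' t u = ∫ s in t..T, (kernelIntegral G Q s u - kernelIntegral G' Q' s u) := by
  rw [h.eq t ht u hu, h'.eq t ht u hu, intervalIntegral.integral_sub
    ((h.continuous_kernelIntegral u).intervalIntegrable _ _)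
    ((h'.continuous_kernelIntegral u).intervalIntegrable _ _)]
  ring

lemma continuous_integral_abs_sub (h : IsBoundedSolution T G Q MG M)
    (h' : IsBoundedSolution T G' Q' MG' M') :
    Continuous fun s => ∫ v in (0:ℝ)..1, |Q s v - Q' s v| :=
  continuous_intervalIntegral_of_abs_le (fun s => ((h.measurable s).sub (h'.measurable s)).abs)
    (abs_abs_sub_le h h')
    (fun v => ((h.continuous v).sub (h'.continuous v)).abs) 0 1

lemma abs_sub_le_add_integral (h : IsBoundedSolution T G Q MG M)
    (h' : IsBoundedSolution T G' Q' MG' M') (hδ0 : 0 ≤ δ)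
    (hδ : ∀ u ∈ Icc (0:ℝ) 1, ∀ v ∈ Icc (0:ℝ) 1, |G u v - G' u v| ≤ δ)
    {t : ℝ} (ht : t ∈ Icc 0 T) {u : ℝ} (hu : u ∈ Icc (0:ℝ) 1) :
    |Q t u - Q' t u| ≤ δ * M * T + MG' * ∫ s in t..T, ∫ v in (0:ℝ)..1, |Q s v - Q' s v| := by
  have hφ := continuous_integral_abs_sub h h'
  calc |Q t u - Q' t u|
      = |∫ s in t..T, (kernelIntegral G Q s u - kernelIntegral G' Q' s u)| := by
        rw [sub_eq_integral_kernelIntegral_sub h h' ht hu]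
    _ ≤ ∫ s in t..T, |kernelIntegral G Q s u - kernelIntegral G' Q' s u| :=
        intervalIntegral.abs_integral_le_integral_abs ht.2
    _ ≤ ∫ s in t..T, (δ * M + MG' * ∫ v in (0:ℝ)..1, |Q s v - Q' s v|) :=
        intervalIntegral.integral_mono_on ht.2
          (((h.continuous_kernelIntegral u).sub (h'.continuous_kernelIntegral u)).abs
            |>.intervalIntegrable _ _)
          ((continuous_const.add (continuous_const.mul hφ)).intervalIntegrable _ _)
          (fun s _ => abs_kernelIntegral_sub_le h h' hδ hu s)
    _ = δ * M * (T - t) + MG' * ∫ s in t..T, ∫ v in (0:ℝ)..1, |Q s v - Q' s v| := by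
        rw [intervalIntegral.integral_add intervalIntegrable_const
          ((hφ.intervalIntegrable t T).const_mul MG'), intervalIntegral.integral_const,
          intervalIntegral.integral_const_mul, smul_eq_mul]
        ring
    _ ≤ δ * M * T + MG' * ∫ s in t..T, ∫ v in (0:ℝ)..1, |Q s v - Q' s v| := by
        have := h.bound_nonneg
        gcongr
        linarith [ht.1]

lemma integral_abs_sub_le_add_integral (h : IsBoundedSolution T G Q MG M)
    (h' : IsBoundedSolution T G' Q' MG' M') (hδ0 : 0 ≤ δ)
    (hδ : ∀ u ∈ Icc (0:ℝ) 1, ∀ v ∈ Icc (0:ℝ) 1, |G u v - G' u v| ≤ δ)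
    {t : ℝ} (ht : t ∈ Icc 0 T) :
    ∫ v in (0:ℝ)..1, |Q t v - Q' t v|
      ≤ δ * M * T + MG' * ∫ s in t..T, ∫ v in (0:ℝ)..1, |Q s v - Q' s v| := by
  simpa using intervalIntegral.integral_mono_on zero_le_one
    (intervalIntegrable_abs_sub h h' t 0 1) intervalIntegrable_const
    (fun v hv => abs_sub_le_add_integral h h' hδ0 hδ ht hv)

theorem abs_sub_le (h : IsBoundedSolution T G Q MG M) (h' : IsBoundedSolution T G' Q' MG' M')
    (hδ0 : 0 ≤ δ) (hδ : ∀ u ∈ Icc (0:ℝ) 1, ∀ v ∈ Icc (0:ℝ) 1, |G u v - G' u v| ≤ δ)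
    {t : ℝ} (ht : t ∈ Icc 0 T) {u : ℝ} (hu : u ∈ Icc (0:ℝ) 1) :
    |Q t u - Q' t u| ≤ δ * (M * T * exp (MG' * T)) := by
  have := h.bound_nonneg
  have := h'.kernel_bound_nonneg
  have hT : 0 ≤ T := ht.1.trans ht.2
  calc |Q t u - Q' t u|
      ≤ δ * M * T + MG' * ∫ s in t..T, ∫ v in (0:ℝ)..1, |Q s v - Q' s v| :=
        abs_sub_le_add_integral h h' hδ0 hδ ht hu
    _ ≤ δ * M * T * exp (MG' * (T - t)) :=
        add_mul_integral_le_mul_exp (continuous_integral_abs_sub h h') h'.kernel_bound_nonneg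
          (fun _ hs => integral_abs_sub_le_add_integral h h' hδ0 hδ hs) t ht
    _ ≤ δ * (M * T * exp (MG' * T)) := by
        rw [mul_assoc δ, mul_assoc δ]
        gcongr
        linarith [ht.1]

end IsBoundedSolution

lemma abs_integral_sq_sub_integral_sq_le {f g : ℝ → ℝ} {T M₁ M₂ ε : ℝ} (hT : 0 ≤ T)
    (hf : Continuous f) (hg : Continuous g) (hfM : ∀ t, |f t| ≤ M₁) (hgM : ∀ t, |g t| ≤ M₂)
    (hε : ∀ t ∈ Icc 0 T, |f t - g t| ≤ ε) :
    |(∫ t in (0:ℝ)..T, f t ^ 2) - ∫ t in (0:ℝ)..T, g t ^ 2| ≤ (M₁ + M₂) * ε * T := by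
  have hε0 : 0 ≤ ε := (abs_nonneg _).trans (hε 0 ⟨le_rfl, hT⟩)
  have hf2 : Continuous fun t => f t ^ 2 := hf.pow 2
  have hg2 : Continuous fun t => g t ^ 2 := hg.pow 2
  rw [← intervalIntegral.integral_sub (hf2.intervalIntegrable 0 T) (hg2.intervalIntegrable 0 T)]
  refine (intervalIntegral.norm_integral_le_of_norm_le_const
    (f := fun t => f t ^ 2 - g t ^ 2) fun t ht => ?_).trans_eq (by rw [sub_zero, abs_of_nonneg hT])
  rw [uIoc_of_le hT] at ht
  calc ‖f t ^ 2 - g t ^ 2‖ = |f t + g t| * |f t - g t| := by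
        rw [Real.norm_eq_abs, ← abs_mul]; ring_nf
    _ ≤ (M₁ + M₂) * ε :=
        mul_le_mul ((abs_add_le _ _).trans (add_le_add (hfM t) (hgM t)))
          (hε t (Ioc_subset_Icc_self ht)) (abs_nonneg _)
          ((abs_nonneg _).trans ((abs_add_le _ _).trans (add_le_add (hfM t) (hgM t))))

lemma abs_sqrt_sub_sqrt_le {a b : ℝ} (ha : 0 ≤ a) (hb : 0 ≤ b) :
    |√a - √b| ≤ √|a - b| := by
  refine Real.abs_le_sqrt ?_
  calc (√a - √b) ^ 2 = |√a - √b| * |√a - √b| := by rw [sq, abs_mul_abs_self]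
    _ ≤ |√a - √b| * (√a + √b) := by
        gcongr
        exact abs_sub_le_iff.2 ⟨by linarith [Real.sqrt_nonneg b], by linarith [Real.sqrt_nonneg a]⟩
    _ = |a - b| := by
        rw [← abs_of_nonneg (by positivity : 0 ≤ √a + √b), ← abs_mul]
        congr 1
        linear_combination Real.sq_sqrt ha - Real.sq_sqrt hb

lemma sqrt_sq_add_sq_le_abs_add_abs (x y : ℝ) : √(x ^ 2 + y ^ 2) ≤ |x| + |y| :=
  Real.sqrt_le_iff.2 ⟨by positivity, by
    nlinarith [sq_abs x, sq_abs y, mul_nonneg (abs_nonneg x) (abs_nonneg y)]⟩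

lemma W2_le_of_coupling {μ ν : Measure ℝ} (κ : Measure (ℝ × ℝ)) [IsProbabilityMeasure κ]
    (h₁ : κ.map Prod.fst = μ) (h₂ : κ.map Prod.snd = ν) :
    W2 μ ν ≤ ((∫⁻ p, ENNReal.ofReal (|p.1 - p.2| ^ 2) ∂κ) ^ (1/2 : ℝ)).toReal :=
  csInf_le ⟨0, by rintro _ ⟨_, -, -, -, rfl⟩; exact ENNReal.toReal_nonneg⟩ ⟨κ, ‹_›, h₁, h₂, rfl⟩

lemma gaussianReal_map_affine (μ : ℝ) (v : ℝ≥0) (a b : ℝ) :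
    (gaussianReal μ v).map (fun x => a * x + b)
      = gaussianReal (a * μ + b) (.mk (a ^ 2) (sq_nonneg a) * v) := by
  rw [show (fun x => a * x + b) = (· + b) ∘ (a * ·) from rfl,
    ← Measure.map_map (measurable_add_const b) (measurable_const_mul a),
    gaussianReal_map_const_mul, gaussianReal_map_add_const]

lemma gaussianReal_map_sqrt_mul_add (m : ℝ) (v : ℝ≥0) :
    (gaussianReal 0 1).map (fun x => √v * x + m) = gaussianReal m v := by
  rw [gaussianReal_map_affine, mul_zero, zero_add, mul_one]
  congr
  simp

lemma integral_sq_gaussianReal (μ : ℝ) (v : ℝ≥0) : ∫ x, x ^ 2 ∂gaussianReal μ v = μ ^ 2 + v := by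
  have h := variance_eq_sub (memLp_id_gaussianReal (μ := μ) (v := v) 2)
  rw [variance_id_gaussianReal] at h
  simp only [Pi.pow_apply, id, integral_id_gaussianReal] at h
  linarith

lemma lintegral_sq_gaussianReal (μ : ℝ) (v : ℝ≥0) :
    ∫⁻ x, ENNReal.ofReal (x ^ 2) ∂gaussianReal μ v = ENNReal.ofReal (μ ^ 2 + v) := by
  have hint : Integrable (fun x : ℝ => x ^ 2) (gaussianReal μ v) :=
    (memLp_id_gaussianReal 2).integrable_sq
  rw [← integral_sq_gaussianReal,
    ofReal_integral_eq_lintegral_ofReal hint (ae_of_all _ fun x => sq_nonneg x)]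

lemma W2_gaussianReal_le (m₁ m₂ : ℝ) (v₁ v₂ : ℝ≥0) :
    W2 (gaussianReal m₁ v₁) (gaussianReal m₂ v₂) ≤ √((m₁ - m₂) ^ 2 + (√v₁ - √v₂) ^ 2) := by
  set f : ℝ → ℝ × ℝ := fun x => (√v₁ * x + m₁, √v₂ * x + m₂)
  have hf : Measurable f := by fun_prop
  have : IsProbabilityMeasure ((gaussianReal 0 1).map f) :=
    Measure.isProbabilityMeasure_map hf.aemeasurable
  have hcost : ∫⁻ p, ENNReal.ofReal (|p.1 - p.2| ^ 2) ∂(gaussianReal 0 1).map f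
      = ENNReal.ofReal ((m₁ - m₂) ^ 2 + (√v₁ - √v₂) ^ 2) := by
    have hdiff : ∀ x, (f x).1 - (f x).2 = (√v₁ - √v₂) * x + (m₁ - m₂) := fun x => by ring
    rw [lintegral_map (by fun_prop) hf]
    simp only [sq_abs, hdiff]
    rw [← lintegral_map (f := fun y => ENNReal.ofReal (y ^ 2)) (by fun_prop) (by fun_prop),
      gaussianReal_map_affine, lintegral_sq_gaussianReal]
    simp
  refine (W2_le_of_coupling ((gaussianReal 0 1).map f) ?_ ?_).trans_eq ?_
  · rw [Measure.map_map measurable_fst hf]; exact gaussianReal_map_sqrt_mul_add m₁ v₁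
  · rw [Measure.map_map measurable_snd hf]; exact gaussianReal_map_sqrt_mul_add m₂ v₂
  · rw [hcost, ← ENNReal.toReal_rpow, ENNReal.toReal_ofReal (by positivity), ← Real.sqrt_eq_rpow]

lemma W2_gaussianReal_half_le {I₁ I₂ : ℝ} (hI₁ : 0 ≤ I₁) (hI₂ : 0 ≤ I₂) :
    W2 (gaussianReal (1/2 * I₁) I₁.toNNReal) (gaussianReal (1/2 * I₂) I₂.toNNReal)
      ≤ |I₁ - I₂| / 2 + √|I₁ - I₂| :=
  calc _ ≤ √((1/2 * I₁ - 1/2 * I₂) ^ 2 + (√I₁ - √I₂) ^ 2) := by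
        simpa only [Real.coe_toNNReal _ hI₁, Real.coe_toNNReal _ hI₂]
          using W2_gaussianReal_le (1/2 * I₁) (1/2 * I₂) I₁.toNNReal I₂.toNNReal
    _ ≤ |1/2 * I₁ - 1/2 * I₂| + |√I₁ - √I₂| := sqrt_sq_add_sq_le_abs_add_abs _ _
    _ ≤ |I₁ - I₂| / 2 + √|I₁ - I₂| := by
        rw [← mul_sub, abs_mul, abs_of_pos one_half_pos, one_div_mul_eq_div]
        gcongr
        exact abs_sqrt_sub_sqrt_le hI₁ hI₂

theorem stmt_7 (T : ℝ) (hT : 0 < T) (G₁ G₂ Q₁ Q₂ : ℝ → ℝ → ℝ)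
    (hG₁m : Measurable (Function.uncurry G₁)) (hG₂m : Measurable (Function.uncurry G₂))
    (hG₁b : ∃ M, ∀ u v, |G₁ u v| ≤ M) (hG₂b : ∃ M, ∀ u v, |G₂ u v| ≤ M)
    (hQ₁m : ∀ t, Measurable (Q₁ t)) (hQ₂m : ∀ t, Measurable (Q₂ t))
    (hQ₁b : ∃ M, ∀ t u, |Q₁ t u| ≤ M) (hQ₂b : ∃ M, ∀ t u, |Q₂ t u| ≤ M)
    (hQ₁c : ∀ u, Continuous fun t => Q₁ t u) (hQ₂c : ∀ u, Continuous fun t => Q₂ t u)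
    (hQ₁eq : ∀ t ∈ Icc (0:ℝ) T, ∀ u ∈ Icc (0:ℝ) 1,
      Q₁ t u = 1 + ∫ s in t..T, ∫ v in (0:ℝ)..(1:ℝ), G₁ v u * Q₁ s v)
    (hQ₂eq : ∀ t ∈ Icc (0:ℝ) T, ∀ u ∈ Icc (0:ℝ) 1,
      Q₂ t u = 1 + ∫ s in t..T, ∫ v in (0:ℝ)..(1:ℝ), G₂ v u * Q₂ s v)
    (ν₁ ν₂ : ℝ → Measure ℝ)
    (hν₁ : ∀ u, ν₁ u = ProbabilityTheory.gaussianReal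
      ((1/2) * ∫ t in (0:ℝ)..T, (Q₁ t u) ^ 2) ((∫ t in (0:ℝ)..T, (Q₁ t u) ^ 2).toNNReal))
    (hν₂ : ∀ u, ν₂ u = ProbabilityTheory.gaussianReal
      ((1/2) * ∫ t in (0:ℝ)..T, (Q₂ t u) ^ 2) ((∫ t in (0:ℝ)..T, (Q₂ t u) ^ 2).toNNReal)) :
    ∃ C > 0, ∀ δ ≥ (0:ℝ),
      (∀ u ∈ Icc (0:ℝ) 1, ∀ v ∈ Icc (0:ℝ) 1, |G₁ u v - G₂ u v| ≤ δ) →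
      ∀ u ∈ Icc (0:ℝ) 1, W2 (ν₁ u) (ν₂ u) ≤ C * (Real.sqrt δ + δ) := by
  obtain ⟨MG₁, hMG₁⟩ := hG₁b
  obtain ⟨MG₂, hMG₂⟩ := hG₂b
  obtain ⟨M₁, hM₁⟩ := hQ₁b
  obtain ⟨M₂, hM₂⟩ := hQ₂b
  have h₁ : IsBoundedSolution T G₁ Q₁ MG₁ M₁ := ⟨hG₁m, hMG₁, hQ₁m, hM₁, hQ₁c, hQ₁eq⟩
  have h₂ : IsBoundedSolution T G₂ Q₂ MG₂ M₂ := ⟨hG₂m, hMG₂, hQ₂m, hM₂, hQ₂c, hQ₂eq⟩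
  set K := (M₁ + M₂) * (M₁ * T * exp (MG₂ * T)) * T
  have hK : 0 ≤ K := by have := h₁.bound_nonneg; have := h₂.bound_nonneg; positivity
  refine ⟨√K + K + 1, by positivity, fun δ hδ0 hδ u hu => ?_⟩
  set I₁ := ∫ t in (0:ℝ)..T, Q₁ t u ^ 2
  set I₂ := ∫ t in (0:ℝ)..T, Q₂ t u ^ 2
  have hI₁ : 0 ≤ I₁ := intervalIntegral.integral_nonneg hT.le fun _ _ => sq_nonneg _
  have hI₂ : 0 ≤ I₂ := intervalIntegral.integral_nonneg hT.le fun _ _ => sq_nonneg _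
  have hI : |I₁ - I₂| ≤ δ * K := by
    have := abs_integral_sq_sub_integral_sq_le hT.le (hQ₁c u) (hQ₂c u) (fun t => hM₁ t u)
      (fun t => hM₂ t u) (fun t ht => h₁.abs_sub_le h₂ hδ0 hδ ht hu)
    linarith
  have hsqrt : √|I₁ - I₂| ≤ √K * √δ := by
    rw [← Real.sqrt_mul hK, mul_comm]
    exact Real.sqrt_le_sqrt hI
  rw [hν₁, hν₂]
  refine (W2_gaussianReal_half_le hI₁ hI₂).trans ?_
  nlinarith [Real.sqrt_nonneg K, Real.sqrt_nonneg δ, mul_nonneg (Real.sqrt_nonneg K) hδ0,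
    mul_nonneg hK (Real.sqrt_nonneg δ)]
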